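/- arXiv:1501.05049 — 9 statements merged into one kernel-verified Lean document; each statement's English description precedes it below -/
import Mathlib

section
/- In the ring Z[s]/(s^2), setting A = [[s, 1+s],[1-s, -s]] and B = [[0,1],[1,0]], we have (A·B)^m ≠ I and (B·A)^m ≠ I for every positive integer m; consequently the representation ρ: FVB_2 → GL_2(Z[s]/(s^2)) sending σ_1 to B and τ_1 to A is injective on the infinite dihedral group FVB_2 = Z_2 * Z_2. -/
/-! With `N = !![-1, -1; 1, 1]`, which squares to zero, `B * A = 1 + s • N` and
`A * B = 1 + (-s) • N`, so `(B * A) ^ m = 1 + (m • s) • N`: these are unipotent matrices of infinite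
order as soon as `s` has infinite additive order, as `ε` does in `ℤ[ε]`.
Every element of `ℤ₂ * ℤ₂` is `(σ₁τ₁) ^ n` or `(σ₁τ₁) ^ n σ₁`. The first kind is sent to `1` only
for `n = 0`; the second never is, since `det ρ(σ₁) = det ρ(τ₁) = -1` while `det 1 = 1`. -/

theorem one_add_pow_of_mul_self_eq_zero {M : Type*} [Semiring M] {x : M} (hx : x * x = 0)
    (m : ℕ) : (1 + x) ^ m = 1 + m • x := by
  rw [nsmul_eq_mul]
  induction m with
  | zero => simp
  | succ k ih =>
    rw [pow_succ, ih, Nat.cast_succ]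
    calc (1 + (k : M) * x) * (1 + x) = 1 + ((k : M) + 1) * x + (k : M) * (x * x) := by
          noncomm_ring
      _ = _ := by rw [hx, mul_zero, add_zero]

theorem neg_one_ne_one_of_not_isOfFinAddOrder {R : Type*} [Ring R] {s : R}
    (hs : ¬IsOfFinAddOrder s) : (-1 : R) ≠ 1 := by
  intro h
  refine hs (isOfFinAddOrder_iff_nsmul_eq_zero.mpr ⟨2, two_pos, ?_⟩)
  calc 2 • s = (1 - -1) * s := by noncomm_ring
    _ = 0 := by rw [h, sub_self, zero_mul]

theorem DualNumber.not_isOfFinAddOrder_eps {R : Type*} [Semiring R] [CharZero R] :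
    ¬IsOfFinAddOrder (DualNumber.eps : DualNumber R) := by
  rw [isOfFinAddOrder_iff_nsmul_eq_zero]
  rintro ⟨n, hn, h⟩
  have hsnd := congrArg TrivSqZeroExt.snd h
  rw [TrivSqZeroExt.snd_smul, DualNumber.snd_eps, TrivSqZeroExt.snd_zero, nsmul_one,
    Nat.cast_eq_zero] at hsnd
  omega

def InfiniteDihedral.rels : Set (FreeGroup (Fin 2)) := {FreeGroup.of 0 ^ 2, FreeGroup.of 1 ^ 2}

local notation "D∞" => PresentedGroup InfiniteDihedral.rels
local notation "σ" => (PresentedGroup.of 0 : D∞)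
local notation "τ" => (PresentedGroup.of 1 : D∞)

namespace InfiniteDihedral

theorem of_mul_self (i : Fin 2) : (PresentedGroup.of i : D∞) * PresentedGroup.of i = 1 := by
  rw [← pow_two]
  refine PresentedGroup.one_of_mem ?_
  fin_cases i <;> simp [rels]

theorem of_inv (i : Fin 2) : (PresentedGroup.of i : D∞)⁻¹ = PresentedGroup.of i :=
  inv_eq_of_mul_eq_one_right (of_mul_self i)

theorem of_zero_mul_zpow (n : ℤ) : σ * (σ * τ) ^ n = (σ * τ) ^ (-n) * σ := by
  have h : SemiconjBy σ (σ * τ) (σ * τ)⁻¹ := by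
    rw [SemiconjBy, mul_inv_rev, of_inv, of_inv, ← mul_assoc, of_mul_self, one_mul, mul_assoc,
      of_mul_self, mul_one]
  rw [zpow_neg, ← inv_zpow]
  exact h.zpow_right n

theorem exists_eq_zpow_or_eq_zpow_mul (g : D∞) :
    ∃ n : ℤ, g = (σ * τ) ^ n ∨ g = (σ * τ) ^ n * σ := by
  have hg : g ∈ Subgroup.closure (Set.range PresentedGroup.of) := by simp
  induction hg using Subgroup.closure_induction with
  | mem x hx =>
    obtain ⟨i, rfl⟩ := hx
    fin_cases i
    · exact ⟨0, Or.inr (by rw [zpow_zero, one_mul]; rfl)⟩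
    · refine ⟨-1, Or.inr ?_⟩
      rw [zpow_neg_one, mul_inv_rev, of_inv, of_inv, mul_assoc, of_mul_self, mul_one]
      rfl
  | one => exact ⟨0, Or.inl (zpow_zero _).symm⟩
  | mul x y _ _ hx hy =>
    obtain ⟨n, rfl | rfl⟩ := hx <;> obtain ⟨k, rfl | rfl⟩ := hy
    · exact ⟨n + k, Or.inl (zpow_add _ n k).symm⟩
    · exact ⟨n + k, Or.inr (by rw [← mul_assoc, ← zpow_add])⟩
    · refine ⟨n - k, Or.inr ?_⟩
      rw [mul_assoc, of_zero_mul_zpow, ← mul_assoc, ← zpow_add, ← sub_eq_add_neg]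
    · refine ⟨n - k, Or.inl ?_⟩
      rw [mul_assoc, ← mul_assoc σ, of_zero_mul_zpow, mul_assoc, of_mul_self, mul_one, ← zpow_add,
        ← sub_eq_add_neg]
  | inv x _ hx =>
    obtain ⟨n, rfl | rfl⟩ := hx
    · exact ⟨-n, Or.inl (zpow_neg _ n).symm⟩
    · exact ⟨n, Or.inr (by rw [mul_inv_rev, of_inv, ← zpow_neg, of_zero_mul_zpow, neg_neg])⟩

theorem injective_of_not_isOfFinOrder {H : Type*} [Group H] (ρ : D∞ →* H)
    (h_rot : ¬IsOfFinOrder (ρ (σ * τ))) (h_refl : ∀ n : ℤ, ρ (σ * τ) ^ n ≠ ρ σ) :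
    Function.Injective ρ := by
  refine (injective_iff_map_eq_one ρ).mpr fun g hg => ?_
  obtain ⟨n, rfl | rfl⟩ := exists_eq_zpow_or_eq_zpow_mul g
  · rw [map_zpow, ← zpow_zero (ρ (σ * τ))] at hg
    rw [injective_zpow_iff_not_isOfFinOrder.mpr h_rot hg, zpow_zero]
  · rw [map_mul, map_zpow, mul_eq_one_iff_eq_inv, ← map_inv, of_inv] at hg
    exact absurd hg (h_refl n)

end InfiniteDihedral

namespace FlatVirtualBraid

variable (R : Type*) [CommRing R]

def sigmaMat : Matrix (Fin 2) (Fin 2) R := !![0, 1; 1, 0]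

def nilMat : Matrix (Fin 2) (Fin 2) R := !![-1, -1; 1, 1]

variable {R}

def tauMat (s : R) : Matrix (Fin 2) (Fin 2) R := !![s, 1 + s; 1 - s, -s]

theorem nilMat_mul_self : nilMat R * nilMat R = 0 := by
  ext i j
  fin_cases i <;> fin_cases j <;> simp [nilMat, Matrix.mul_apply]

theorem one_add_smul_nilMat_pow (t : R) (m : ℕ) :
    (1 + t • nilMat R) ^ m = 1 + (m • t) • nilMat R := by
  rw [one_add_pow_of_mul_self_eq_zero (by rw [smul_mul_smul_comm, nilMat_mul_self, smul_zero]),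
    smul_assoc]

theorem one_add_smul_nilMat_eq_one_iff (t : R) : 1 + t • nilMat R = 1 ↔ t = 0 := by
  refine ⟨fun h => ?_, fun h => by simp [h]⟩
  simpa [nilMat] using congrFun (congrFun h 1) 0

theorem isOfFinOrder_one_add_smul_nilMat_iff (t : R) :
    IsOfFinOrder (1 + t • nilMat R) ↔ IsOfFinAddOrder t := by
  simp only [isOfFinOrder_iff_pow_eq_one, isOfFinAddOrder_iff_nsmul_eq_zero,
    one_add_smul_nilMat_pow, one_add_smul_nilMat_eq_one_iff]

theorem sigmaMat_mul_tauMat (s : R) : sigmaMat R * tauMat s = 1 + s • nilMat R := by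
  ext i j
  fin_cases i <;> fin_cases j <;>
    simp [sigmaMat, tauMat, nilMat, Matrix.mul_apply, Matrix.one_fin_two, sub_eq_add_neg, add_comm]

theorem tauMat_mul_sigmaMat (s : R) : tauMat s * sigmaMat R = 1 + (-s) • nilMat R := by
  ext i j
  fin_cases i <;> fin_cases j <;>
    simp [sigmaMat, tauMat, nilMat, Matrix.mul_apply, Matrix.one_fin_two, sub_eq_add_neg, add_comm]

theorem det_sigmaMat : (sigmaMat R).det = -1 := by
  rw [sigmaMat, Matrix.det_fin_two_of]
  ring

theorem det_tauMat (s : R) : (tauMat s).det = -1 := by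
  rw [tauMat, Matrix.det_fin_two_of]
  ring

theorem injective_of_not_isOfFinAddOrder {s : R} (hs : ¬IsOfFinAddOrder s)
    (ρ : D∞ →* Matrix.GeneralLinearGroup (Fin 2) R)
    (hσ : (ρ σ : Matrix (Fin 2) (Fin 2) R) = sigmaMat R)
    (hτ : (ρ τ : Matrix (Fin 2) (Fin 2) R) = tauMat s) :
    Function.Injective ρ := by
  have hrot : (ρ (σ * τ) : Matrix (Fin 2) (Fin 2) R) = 1 + s • nilMat R := by
    rw [map_mul, Units.val_mul, hσ, hτ, sigmaMat_mul_tauMat]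
  refine InfiniteDihedral.injective_of_not_isOfFinOrder ρ ?_ fun n h => ?_
  · rwa [← Units.isOfFinOrder_val, hrot, isOfFinOrder_one_add_smul_nilMat_iff]
  · have hdet_rot : Matrix.GeneralLinearGroup.det (ρ (σ * τ)) = 1 := by
      refine Units.ext ?_
      rw [Matrix.GeneralLinearGroup.val_det_apply, map_mul, Units.val_mul, hσ, hτ, Matrix.det_mul,
        det_sigmaMat, det_tauMat, Units.val_one, neg_one_mul, neg_neg]
    have hdet_σ : Matrix.GeneralLinearGroup.det (ρ σ) = -1 := by
      refine Units.ext ?_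
      rw [Matrix.GeneralLinearGroup.val_det_apply, hσ, det_sigmaMat, Units.val_neg, Units.val_one]
    have hdet := congrArg Matrix.GeneralLinearGroup.det h
    rw [map_zpow, hdet_rot, one_zpow, hdet_σ] at hdet
    exact neg_one_ne_one_of_not_isOfFinAddOrder hs (congrArg Units.val hdet).symm

end FlatVirtualBraid

open DualNumber FlatVirtualBraid in
theorem stmt_3 :
    let s : DualNumber ℤ := eps
    let A : Matrix (Fin 2) (Fin 2) (DualNumber ℤ) := !![s, 1 + s; 1 - s, -s]
    let B : Matrix (Fin 2) (Fin 2) (DualNumber ℤ) := !![0, 1; 1, 0]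
    -- relations of FVB₂ = Z₂ * Z₂ : σ₁² = τ₁² = 1
    let rels : Set (FreeGroup (Fin 2)) := {(FreeGroup.of 0) ^ 2, (FreeGroup.of 1) ^ 2}
    (∀ m : ℕ, 1 ≤ m → (A * B) ^ m ≠ 1 ∧ (B * A) ^ m ≠ 1) ∧
      ∀ ρ : PresentedGroup rels →* Matrix.GeneralLinearGroup (Fin 2) (DualNumber ℤ),
        ((ρ (PresentedGroup.of 0) : Matrix (Fin 2) (Fin 2) (DualNumber ℤ)) = B) →
        ((ρ (PresentedGroup.of 1) : Matrix (Fin 2) (Fin 2) (DualNumber ℤ)) = A) →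
        Function.Injective ρ := by
  intro s A B rels
  have hε : ¬IsOfFinAddOrder s := not_isOfFinAddOrder_eps
  have hAB : ¬IsOfFinOrder (A * B) := by
    rw [show A * B = _ from tauMat_mul_sigmaMat s, isOfFinOrder_one_add_smul_nilMat_iff,
      isOfFinAddOrder_neg_iff]
    exact hε
  have hBA : ¬IsOfFinOrder (B * A) := by
    rwa [show B * A = _ from sigmaMat_mul_tauMat s, isOfFinOrder_one_add_smul_nilMat_iff]
  refine ⟨fun m hm => ⟨?_, ?_⟩, fun ρ hσ hτ => injective_of_not_isOfFinAddOrder hε ρ hσ hτ⟩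
  · exact fun h => hAB (isOfFinOrder_iff_pow_eq_one.mpr ⟨m, hm, h⟩)
  · exact fun h => hBA (isOfFinOrder_iff_pow_eq_one.mpr ⟨m, hm, h⟩)
end

section
/- The map ρ: VB_n → GL_n(Z[s]/(s^2)) defined by sending σ_i to I_{i-1} ⊕ [[0,1],[1,0]] ⊕ I_{n-i-1} and τ_i to I_{i-1} ⊕ [[s,1+s],[1-s,-s]] ⊕ I_{n-i-1} respects all the defining relations of the virtual braid group VB_n: σ_iσ_j = σ_jσ_i and σ_iτ_j = τ_jσ_i and τ_iτ_j = τ_jτ_i for |i-j|>1, σ_iσ_{i+1}σ_i = σ_{i+1}σ_iσ_{i+1}, τ_i^2 = 1, τ_iτ_{i+1}τ_i = τ_{i+1}τ_iτ_{i+1}, and σ_iτ_{i+1}τ_i = τ_{i+1}τ_iσ_{i+1}. -/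
/-!
Each generator is the identity outside a `2 × 2` block on two adjacent strands, i.e. a block
sum `I ⊕ M ⊕ I`, and such matrices multiply blockwise. Matrices supported on disjoint blocks
commute, which gives the relations for `|i - j| > 1`. The other relations only involve the
strands `i, i + 1, i + 2`, so they reduce to identities between `3 × 3` matrices (`2 × 2` for
`τ² = 1`, which holds for every `s`); the relations with three factors need `s² = 0`.
-/

open DualNumber

/-- image of the real crossing generator σ (0-indexed: block at rows i, i+1) -/
noncomputable def sigmaMat (n i : ℕ) : Matrix (Fin n) (Fin n) (DualNumber ℤ) :=
  fun k l =>
    if (k : ℕ) = i then (if (l : ℕ) = i + 1 then 1 else 0)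
    else if (k : ℕ) = i + 1 then (if (l : ℕ) = i then 1 else 0)
    else if k = l then 1 else 0

/-- image of the virtual crossing generator τ (0-indexed: block at rows i, i+1) -/
noncomputable def tauMat (n i : ℕ) : Matrix (Fin n) (Fin n) (DualNumber ℤ) :=
  fun k l =>
    if (k : ℕ) = i then
      (if (l : ℕ) = i then eps else if (l : ℕ) = i + 1 then 1 + eps else 0)
    else if (k : ℕ) = i + 1 then
      (if (l : ℕ) = i then 1 - eps else if (l : ℕ) = i + 1 then -eps else 0)
    else if k = l then 1 else 0

namespace Function.Embedding

variable {ι κ : Type*} [Fintype ι] [DecidableEq κ]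

def sumRangeCompl (e : ι ↪ κ) : ι ⊕ {k // k ∉ Set.range e} ≃ κ :=
  (Equiv.sumCongr e.toEquivRange (Equiv.refl _)).trans (Equiv.sumCompl (· ∈ Set.range e))

@[simp]
theorem sumRangeCompl_symm_apply_self (e : ι ↪ κ) (a : ι) :
    e.sumRangeCompl.symm (e a) = Sum.inl a := by
  rw [Equiv.symm_apply_eq]; rfl

theorem sumRangeCompl_symm_apply_of_notMem {e : ι ↪ κ} {k : κ} (hk : k ∉ Set.range e) :
    e.sumRangeCompl.symm k = Sum.inr ⟨k, hk⟩ := by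
  rw [Equiv.symm_apply_eq]; simp [sumRangeCompl, Equiv.sumCompl]

end Function.Embedding

namespace Matrix

open Set
open Function.Embedding (sumRangeCompl_symm_apply_of_notMem)

variable {ι κ R : Type*} [Fintype ι] [DecidableEq κ]

/-- `M` on the image of `e` and the identity elsewhere: for an interval `e` of `Fin n`, the
block sum `I ⊕ M ⊕ I`. -/
def extendById [Zero R] [One R] (e : ι ↪ κ) (M : Matrix ι ι R) : Matrix κ κ R :=
  (fromBlocks M 0 0 1).submatrix e.sumRangeCompl.symm e.sumRangeCompl.symm

section Apply

variable [Zero R] [One R] (e : ι ↪ κ) (M : Matrix ι ι R)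

@[simp]
theorem extendById_apply_apply (a b : ι) : extendById e M (e a) (e b) = M a b := by
  simp [extendById]

theorem extendById_apply_of_notMem_left {k : κ} (hk : k ∉ range e) (l : κ) :
    extendById e M k l = (1 : Matrix κ κ R) k l := by
  by_cases hl : l ∈ range e
  · obtain ⟨b, rfl⟩ := hl
    have hne : k ≠ e b := fun h => hk ⟨b, h.symm⟩
    simp [extendById, sumRangeCompl_symm_apply_of_notMem hk, one_apply_ne hne]
  · simp [extendById, sumRangeCompl_symm_apply_of_notMem hk,
      sumRangeCompl_symm_apply_of_notMem hl, one_apply]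

theorem extendById_apply_of_notMem_right (k : κ) {l : κ} (hl : l ∉ range e) :
    extendById e M k l = (1 : Matrix κ κ R) k l := by
  by_cases hk : k ∈ range e
  · obtain ⟨a, rfl⟩ := hk
    have hne : e a ≠ l := fun h => hl ⟨a, h⟩
    simp [extendById, sumRangeCompl_symm_apply_of_notMem hl, one_apply_ne hne]
  · exact extendById_apply_of_notMem_left e M hk l

theorem eq_extendById_of {N : Matrix κ κ R} (h_in : ∀ a b, N (e a) (e b) = M a b)
    (h_out : ∀ k l, k ∉ range e ∨ l ∉ range e → N k l = (1 : Matrix κ κ R) k l) :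
    N = extendById e M := by
  ext k l
  by_cases hk : k ∈ range e
  · by_cases hl : l ∈ range e
    · obtain ⟨a, rfl⟩ := hk
      obtain ⟨b, rfl⟩ := hl
      rw [h_in, extendById_apply_apply]
    · rw [h_out k l (.inr hl), extendById_apply_of_notMem_right e M k hl]
  · rw [h_out k l (.inl hk), extendById_apply_of_notMem_left e M hk l]

theorem extendById_trans [DecidableEq ι] {ι₀ : Type*} [Fintype ι₀] [DecidableEq ι₀]
    (f : ι₀ ↪ ι) (M : Matrix ι₀ ι₀ R) :
    extendById e (extendById f M) = extendById (f.trans e) M := by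
  refine eq_extendById_of _ _ (fun a b => by simp) fun k l hkl => ?_
  by_cases hk : k ∈ range e
  · by_cases hl : l ∈ range e
    · obtain ⟨a, rfl⟩ := hk
      obtain ⟨b, rfl⟩ := hl
      have hf : a ∉ range f ∨ b ∉ range f := by
        refine hkl.imp (fun h ⟨c, hc⟩ => h ⟨c, ?_⟩) (fun h ⟨c, hc⟩ => h ⟨c, ?_⟩) <;>
          simp [hc]
      rw [extendById_apply_apply]
      rcases hf with ha | hb
      · simp [extendById_apply_of_notMem_left f M ha, one_apply]
      · simp [extendById_apply_of_notMem_right f M a hb, one_apply]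
    · exact extendById_apply_of_notMem_right e _ k hl
  · exact extendById_apply_of_notMem_left e _ hk l

end Apply

theorem extendById_mul [Fintype κ] [Semiring R] (e : ι ↪ κ) (A B : Matrix ι ι R) :
    extendById e A * extendById e B = extendById e (A * B) := by
  simp [extendById, submatrix_mul_equiv, fromBlocks_multiply]

theorem extendById_one [DecidableEq ι] [Semiring R] (e : ι ↪ κ) :
    extendById e (1 : Matrix ι ι R) = 1 := by
  simp [extendById, fromBlocks_one]

theorem commute_extendById [Fintype κ] [Semiring R] (e : ι ↪ κ) {A B : Matrix ι ι R}
    (h : Commute A B) : Commute (extendById e A) (extendById e B) := by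
  rw [Commute, SemiconjBy, extendById_mul, extendById_mul, h.eq]

theorem extendById_inl [Zero R] [One R] [DecidableEq ι] {ι' : Type*} [DecidableEq ι']
    (A : Matrix ι ι R) :
    extendById (Function.Embedding.inl : ι ↪ ι ⊕ ι') A =
      fromBlocks A 0 0 (1 : Matrix ι' ι' R) := by
  refine (eq_extendById_of _ A (fun a b => rfl) fun k l hkl => ?_).symm
  rcases k with a | a <;> rcases l with b | b <;> simp_all [one_apply]

theorem extendById_inr [Zero R] [One R] [DecidableEq ι] {ι' : Type*} [DecidableEq ι']
    (B : Matrix ι ι R) :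
    extendById (Function.Embedding.inr : ι ↪ ι' ⊕ ι) B =
      fromBlocks (1 : Matrix ι' ι' R) 0 0 B := by
  refine (eq_extendById_of _ B (fun a b => rfl) fun k l hkl => ?_).symm
  rcases k with a | a <;> rcases l with b | b <;> simp_all [one_apply]

theorem commute_extendById_of_disjoint [Fintype κ] [DecidableEq ι] [Semiring R]
    {ι' : Type*} [Fintype ι'] [DecidableEq ι'] {e : ι ↪ κ} {f : ι' ↪ κ}
    (h : Disjoint (range e) (range f)) (A : Matrix ι ι R) (B : Matrix ι' ι' R) :
    Commute (extendById e A) (extendById f B) := by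
  let g : ι ⊕ ι' ↪ κ := ⟨Sum.elim e f, e.injective.sumElim f.injective
    fun a b hab => h.ne_of_mem (mem_range_self a) (mem_range_self b) hab⟩
  have hA : extendById e A = extendById g (fromBlocks A 0 0 1) := by
    rw [← extendById_inl, extendById_trans]; rfl
  have hB : extendById f B = extendById g (fromBlocks 1 0 0 B) := by
    rw [← extendById_inr, extendById_trans]; rfl
  rw [hA, hB]
  refine commute_extendById g ?_
  simp [Commute, SemiconjBy, fromBlocks_multiply]

end Matrix

namespace Fin

def intervalEmb {m n : ℕ} (i : ℕ) (h : i + m ≤ n) : Fin m ↪ Fin n :=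
  (natAddEmb i).trans (castLEEmb h)

variable {m n i : ℕ}

@[simp]
theorem val_intervalEmb (h : i + m ≤ n) (a : Fin m) : (intervalEmb i h a : ℕ) = i + a := rfl

theorem mem_range_intervalEmb (h : i + m ≤ n) {k : Fin n} :
    k ∈ Set.range (intervalEmb i h) ↔ i ≤ k ∧ (k : ℕ) < i + m := by
  constructor
  · rintro ⟨a, rfl⟩
    simp
  · rintro ⟨hik, hki⟩
    exact ⟨⟨k - i, by omega⟩, Fin.ext (by simp; omega)⟩

theorem disjoint_range_intervalEmb {m' j : ℕ} (hi : i + m ≤ n) (hj : j + m' ≤ n)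
    (h : i + m ≤ j ∨ j + m' ≤ i) :
    Disjoint (Set.range (intervalEmb i hi)) (Set.range (intervalEmb j hj)) := by
  rw [Set.disjoint_left]
  intro k hk hk'
  rw [mem_range_intervalEmb] at hk hk'
  omega

theorem castSuccEmb_trans_intervalEmb (h : i + (m + 1) ≤ n) :
    castSuccEmb.trans (intervalEmb i h) = intervalEmb i (by omega) := by
  ext; simp

theorem succEmb_trans_intervalEmb (h : i + (m + 1) ≤ n) :
    (succEmb m).trans (intervalEmb i h) = intervalEmb (i + 1) (by omega) := by
  ext; simp; omega

end Fin

open Matrix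

section Strands

variable {R : Type*}

theorem extendById_intervalEmb_eq_castSuccEmb [Semiring R] {m n i : ℕ} (h : i + (m + 1) ≤ n)
    (M : Matrix (Fin m) (Fin m) R) :
    extendById (Fin.intervalEmb i (by omega)) M =
      extendById (Fin.intervalEmb i h) (extendById Fin.castSuccEmb M) := by
  rw [extendById_trans, Fin.castSuccEmb_trans_intervalEmb]

theorem extendById_intervalEmb_eq_succEmb [Semiring R] {m n i : ℕ} (h : i + (m + 1) ≤ n)
    (M : Matrix (Fin m) (Fin m) R) :
    extendById (Fin.intervalEmb (i + 1) (by omega)) M =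
      extendById (Fin.intervalEmb i h) (extendById (Fin.succEmb m) M) := by
  rw [extendById_trans, Fin.succEmb_trans_intervalEmb]

theorem extendById_intervalEmb_relation_of_fin_three [Semiring R] {n i : ℕ} (h : i + 3 ≤ n)
    {A B C A' B' C' : Matrix (Fin 2) (Fin 2) R}
    (hrel : extendById Fin.castSuccEmb A * extendById (Fin.succEmb 2) B *
        extendById Fin.castSuccEmb C =
      extendById (Fin.succEmb 2) A' * extendById Fin.castSuccEmb B' *
        extendById (Fin.succEmb 2) C') :
    extendById (Fin.intervalEmb i (by omega)) A * extendById (Fin.intervalEmb (i + 1) h) B *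
        extendById (Fin.intervalEmb i (by omega)) C =
      extendById (Fin.intervalEmb (i + 1) h) A' * extendById (Fin.intervalEmb i (by omega)) B' *
        extendById (Fin.intervalEmb (i + 1) h) C' := by
  simp only [extendById_intervalEmb_eq_castSuccEmb h, extendById_intervalEmb_eq_succEmb h,
    extendById_mul, hrel]

def sigmaBlock [Zero R] [One R] : Matrix (Fin 2) (Fin 2) R := !![0, 1; 1, 0]

def tauBlock [Ring R] (s : R) : Matrix (Fin 2) (Fin 2) R := !![s, 1 + s; 1 - s, -s]

theorem extendById_castSuccEmb_fin_two [Zero R] [One R] (M : Matrix (Fin 2) (Fin 2) R) :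
    extendById Fin.castSuccEmb M = !![M 0 0, M 0 1, 0; M 1 0, M 1 1, 0; 0, 0, 1] := by
  refine (eq_extendById_of _ M (fun a b => ?_) fun k l hkl => ?_).symm
  · fin_cases a <;> fin_cases b <;> rfl
  · fin_cases k <;> fin_cases l <;> simp_all [Fin.range_castSucc]

theorem extendById_succEmb_fin_two [Zero R] [One R] (M : Matrix (Fin 2) (Fin 2) R) :
    extendById (Fin.succEmb 2) M = !![1, 0, 0; 0, M 0 0, M 0 1; 0, M 1 0, M 1 1] := by
  refine (eq_extendById_of _ M (fun a b => ?_) fun k l hkl => ?_).symm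
  · fin_cases a <;> fin_cases b <;> rfl
  · fin_cases k <;> fin_cases l <;> simp_all [Fin.range_succ]

theorem sigmaBlock_braid [Semiring R] :
    extendById Fin.castSuccEmb (sigmaBlock : Matrix (Fin 2) (Fin 2) R) *
        extendById (Fin.succEmb 2) sigmaBlock * extendById Fin.castSuccEmb sigmaBlock =
      extendById (Fin.succEmb 2) sigmaBlock * extendById Fin.castSuccEmb sigmaBlock *
        extendById (Fin.succEmb 2) sigmaBlock := by
  simp [extendById_castSuccEmb_fin_two, extendById_succEmb_fin_two, sigmaBlock]

variable [CommRing R]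

theorem tauBlock_mul_self (s : R) : tauBlock s * tauBlock s = 1 := by
  rw [tauBlock, mul_fin_two, one_fin_two]
  simp only [EmbeddingLike.apply_eq_iff_eq, vecCons_inj]
  grind

theorem tauBlock_braid {s : R} (hs : s * s = 0) :
    extendById Fin.castSuccEmb (tauBlock s) * extendById (Fin.succEmb 2) (tauBlock s) *
        extendById Fin.castSuccEmb (tauBlock s) =
      extendById (Fin.succEmb 2) (tauBlock s) * extendById Fin.castSuccEmb (tauBlock s) *
        extendById (Fin.succEmb 2) (tauBlock s) := by
  simp only [Nat.reduceAdd, extendById_castSuccEmb_fin_two, extendById_succEmb_fin_two,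
    tauBlock, of_apply, cons_val_zero, cons_val_one, mul_fin_three,
    EmbeddingLike.apply_eq_iff_eq, vecCons_inj]
  grind

theorem sigmaBlock_tauBlock_mixed_braid {s : R} (hs : s * s = 0) :
    extendById Fin.castSuccEmb sigmaBlock * extendById (Fin.succEmb 2) (tauBlock s) *
        extendById Fin.castSuccEmb (tauBlock s) =
      extendById (Fin.succEmb 2) (tauBlock s) * extendById Fin.castSuccEmb (tauBlock s) *
        extendById (Fin.succEmb 2) sigmaBlock := by
  simp only [Nat.reduceAdd, extendById_castSuccEmb_fin_two, extendById_succEmb_fin_two,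
    sigmaBlock, tauBlock, of_apply, cons_val_zero, cons_val_one, mul_fin_three,
    EmbeddingLike.apply_eq_iff_eq, vecCons_inj]
  grind

end Strands

theorem sigmaMat_eq_extendById {n i : ℕ} (h : i + 2 ≤ n) :
    sigmaMat n i = extendById (Fin.intervalEmb i h) sigmaBlock := by
  refine eq_extendById_of _ _ (fun a b => ?_) fun k l hkl => ?_
  · fin_cases a <;> fin_cases b <;> simp [sigmaMat, sigmaBlock]
  · rw [Fin.mem_range_intervalEmb, Fin.mem_range_intervalEmb] at hkl
    simp only [sigmaMat, one_apply, Fin.ext_iff]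
    split_ifs <;> first | rfl | omega

theorem tauMat_eq_extendById {n i : ℕ} (h : i + 2 ≤ n) :
    tauMat n i = extendById (Fin.intervalEmb i h) (tauBlock eps) := by
  refine eq_extendById_of _ _ (fun a b => ?_) fun k l hkl => ?_
  · fin_cases a <;> fin_cases b <;> simp [tauMat, tauBlock]
  · rw [Fin.mem_range_intervalEmb, Fin.mem_range_intervalEmb] at hkl
    simp only [tauMat, one_apply, Fin.ext_iff]
    split_ifs <;> first | rfl | omega

theorem stmt_4 (n : ℕ) :
    (∀ i j : ℕ, i + 1 < n → j + 1 < n → (i + 1 < j ∨ j + 1 < i) →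
      sigmaMat n i * sigmaMat n j = sigmaMat n j * sigmaMat n i ∧
      sigmaMat n i * tauMat n j = tauMat n j * sigmaMat n i ∧
      tauMat n i * tauMat n j = tauMat n j * tauMat n i) ∧
    (∀ i : ℕ, i + 2 < n →
      sigmaMat n i * sigmaMat n (i + 1) * sigmaMat n i =
        sigmaMat n (i + 1) * sigmaMat n i * sigmaMat n (i + 1)) ∧
    (∀ i : ℕ, i + 1 < n → tauMat n i * tauMat n i = 1) ∧
    (∀ i : ℕ, i + 2 < n →
      tauMat n i * tauMat n (i + 1) * tauMat n i =
        tauMat n (i + 1) * tauMat n i * tauMat n (i + 1)) ∧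
    (∀ i : ℕ, i + 2 < n →
      sigmaMat n i * tauMat n (i + 1) * tauMat n i =
        tauMat n (i + 1) * tauMat n i * sigmaMat n (i + 1)) := by
  refine ⟨fun i j hi hj hij => ?_, fun i hi => ?_, fun i hi => ?_, fun i hi => ?_,
    fun i hi => ?_⟩
  · have hd := Fin.disjoint_range_intervalEmb (m := 2) (m' := 2) hi hj (by omega)
    rw [sigmaMat_eq_extendById hi, sigmaMat_eq_extendById hj, tauMat_eq_extendById hj,
      tauMat_eq_extendById hi]
    exact ⟨(commute_extendById_of_disjoint hd _ _).eq,
      (commute_extendById_of_disjoint hd _ _).eq, (commute_extendById_of_disjoint hd _ _).eq⟩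
  · rw [sigmaMat_eq_extendById (by omega : i + 2 ≤ n), sigmaMat_eq_extendById hi]
    exact extendById_intervalEmb_relation_of_fin_three hi sigmaBlock_braid
  · rw [tauMat_eq_extendById hi, extendById_mul, tauBlock_mul_self, extendById_one]
  · rw [tauMat_eq_extendById (by omega : i + 2 ≤ n), tauMat_eq_extendById hi]
    exact extendById_intervalEmb_relation_of_fin_three hi (tauBlock_braid eps_mul_eps)
  · rw [sigmaMat_eq_extendById (by omega : i + 2 ≤ n), sigmaMat_eq_extendById hi,
      tauMat_eq_extendById (by omega : i + 2 ≤ n), tauMat_eq_extendById hi]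
    exact extendById_intervalEmb_relation_of_fin_three hi
      (sigmaBlock_tauBlock_mixed_braid eps_mul_eps)
end

section
/- In GL_3(Z[s]/(s^2)), the product ρ(σ_2)ρ(τ_1)ρ(σ_1)ρ(τ_2)ρ(σ_2)ρ(σ_1)ρ(τ_1)ρ(σ_2)ρ(τ_2)ρ(σ_2) equals the identity matrix, where ρ(σ_1) = [[0,1,0],[1,0,0],[0,0,1]], ρ(σ_2) = [[1,0,0],[0,0,1],[0,1,0]], ρ(τ_1) = [[s,1+s,0],[1-s,-s,0],[0,0,1]], ρ(τ_2) = [[1,0,0],[0,s,1+s],[0,1-s,-s]]. -/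
/-!
The word splits as `X * Y` with `X = σ₂ τ₁ σ₁ τ₂` and `Y = σ₂ σ₁ τ₁ σ₂ τ₂ σ₂`. Over any
commutative ring in which `s * s = 0`, a direct computation gives `X = 1 + s • D` and
`Y = 1 - s • D` for the same integer matrix `D = firstOrderTerm`, hence
`X * Y = 1 - (s * s) • D ^ 2 = 1`.
-/

theorem one_add_smul_mul_one_sub_smul {R A : Type*} [CommRing R] [Ring A] [Algebra R A]
    {s : R} (hs : s * s = 0) (a : A) : (1 + s • a) * (1 - s • a) = 1 := by
  rw [mul_sub, mul_one, add_mul, one_mul, smul_mul_smul, hs, zero_smul]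
  abel

namespace FlatVirtualBraid

variable {R : Type*} [CommRing R]

def sigma₁ : Matrix (Fin 3) (Fin 3) R := !![0, 1, 0; 1, 0, 0; 0, 0, 1]

def sigma₂ : Matrix (Fin 3) (Fin 3) R := !![1, 0, 0; 0, 0, 1; 0, 1, 0]

def tau₁ (s : R) : Matrix (Fin 3) (Fin 3) R := !![s, 1 + s, 0; 1 - s, -s, 0; 0, 0, 1]

def tau₂ (s : R) : Matrix (Fin 3) (Fin 3) R := !![1, 0, 0; 0, s, 1 + s; 0, 1 - s, -s]

def firstOrderTerm : Matrix (Fin 3) (Fin 3) R := !![1, 0, 1; 0, -1, -1; -1, 1, 0]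

theorem sigma₂_tau₁_sigma₁_tau₂ {s : R} (hs : s * s = 0) :
    sigma₂ * tau₁ s * sigma₁ * tau₂ s = 1 + s • firstOrderTerm := by
  simp only [sigma₁, sigma₂, tau₁, tau₂, firstOrderTerm, Matrix.mul_fin_three, Matrix.one_fin_three,
    Matrix.smul_of, Matrix.smul_cons, Matrix.smul_empty, Matrix.of_add_of, Matrix.add_cons,
    Matrix.empty_add_empty, EmbeddingLike.apply_eq_iff_eq, Matrix.vecCons_inj, Matrix.head_cons,
    Matrix.tail_cons, smul_eq_mul]
  grind

theorem sigma₂_sigma₁_tau₁_sigma₂_tau₂_sigma₂ {s : R} (hs : s * s = 0) :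
    sigma₂ * sigma₁ * tau₁ s * sigma₂ * tau₂ s * sigma₂ = 1 - s • firstOrderTerm := by
  simp only [sigma₁, sigma₂, tau₁, tau₂, firstOrderTerm, Matrix.mul_fin_three, Matrix.one_fin_three,
    Matrix.smul_of, Matrix.smul_cons, Matrix.smul_empty, Matrix.of_sub_of, Matrix.sub_cons,
    Matrix.empty_sub_empty, EmbeddingLike.apply_eq_iff_eq, Matrix.vecCons_inj, Matrix.head_cons,
    Matrix.tail_cons, smul_eq_mul]
  grind

end FlatVirtualBraid

open DualNumber in
theorem stmt_6 :
    let s : DualNumber ℤ := eps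
    let S1 : Matrix (Fin 3) (Fin 3) (DualNumber ℤ) := !![0,1,0; 1,0,0; 0,0,1]
    let S2 : Matrix (Fin 3) (Fin 3) (DualNumber ℤ) := !![1,0,0; 0,0,1; 0,1,0]
    let T1 : Matrix (Fin 3) (Fin 3) (DualNumber ℤ) := !![s, 1+s, 0; 1-s, -s, 0; 0,0,1]
    let T2 : Matrix (Fin 3) (Fin 3) (DualNumber ℤ) := !![1,0,0; 0, s, 1+s; 0, 1-s, -s]
    S2 * T1 * S1 * T2 * S2 * S1 * T1 * S2 * T2 * S2 = 1 := by
  intro s S1 S2 T1 T2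
  open FlatVirtualBraid in
  calc S2 * T1 * S1 * T2 * S2 * S1 * T1 * S2 * T2 * S2
      = (sigma₂ * tau₁ s * sigma₁ * tau₂ s) *
          (sigma₂ * sigma₁ * tau₁ s * sigma₂ * tau₂ s * sigma₂) := by
        simp only [mul_assoc]
        rfl
    _ = (1 + s • firstOrderTerm) * (1 - s • firstOrderTerm) := by
        rw [sigma₂_tau₁_sigma₁_tau₂ eps_mul_eps, sigma₂_sigma₁_tau₁_sigma₂_tau₂_sigma₂ eps_mul_eps]
    _ = 1 := one_add_smul_mul_one_sub_smul eps_mul_eps _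
end

section
/- Let S be a virtual flat biquandle, i.e. a set with two binary operations written S_b(a) = a*b and T_b(a) = a∘b satisfying: (i) S_a S_b = S_b S_a, T_a T_b = T_b T_a, S_a T_b = T_b S_a as maps; (ii) S_a = S_{T_b(a)} = S_{S_b(a)} and T_a = T_{S_b(a)} = T_{T_b(a)}; (iii) T_a S_a = S_a T_a = id. Then for every a in S there exist unique x, y in S such that a∘x = x, x*a = a, y∘a = a, and a*y = y; namely x = a∘a and y = a*a. -/
/-- A virtual flat biquandle: a set with two binary operations
`star a b = S_b(a)` and `circ a b = T_b(a)` satisfying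
(i) `S_a S_b = S_b S_a`, `T_a T_b = T_b T_a`, `S_a T_b = T_b S_a`;
(ii) `S_a = S_{T_b(a)} = S_{S_b(a)}`, `T_a = T_{S_b(a)} = T_{T_b(a)}`;
(iii) `T_a S_a = S_a T_a = id`. -/
structure VFB (S : Type*) where
  star : S → S → S
  circ : S → S → S
  star_star_comm : ∀ a b x, star (star x b) a = star (star x a) b
  circ_circ_comm : ∀ a b x, circ (circ x b) a = circ (circ x a) b
  star_circ_comm : ∀ a b x, star (circ x b) a = circ (star x a) b
  star_circ_invar : ∀ a b x, star x (circ a b) = star x a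
  star_star_invar : ∀ a b x, star x (star a b) = star x a
  circ_star_invar : ∀ a b x, circ x (star a b) = circ x a
  circ_circ_invar : ∀ a b x, circ x (circ a b) = circ x a
  circ_star : ∀ a x, circ (star x a) a = x
  star_circ : ∀ a x, star (circ x a) a = x

namespace VFB

variable {S : Type*} (V : VFB S)

theorem circ_self_spec (a : S) :
    V.circ a (V.circ a a) = V.circ a a ∧ V.star (V.circ a a) a = a :=
  ⟨V.circ_circ_invar a a a, V.star_circ a a⟩

theorem star_self_spec (a : S) :
    V.circ (V.star a a) a = a ∧ V.star a (V.star a a) = V.star a a :=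
  ⟨V.circ_star a a, V.star_star_invar a a a⟩

theorem eq_circ_self_of_star_eq {x a : S} (h : V.star x a = a) : x = V.circ a a := by
  simpa only [h] using (V.circ_star a x).symm

theorem eq_star_self_of_circ_eq {y a : S} (h : V.circ y a = a) : y = V.star a a := by
  simpa only [h] using (V.star_circ a y).symm

end VFB

theorem stmt_7 {S : Type*} (V : VFB S) (a : S) :
    (∃! x : S, V.circ a x = x ∧ V.star x a = a) ∧
    (∃! y : S, V.circ y a = a ∧ V.star a y = y) ∧
    (V.circ a (V.circ a a) = V.circ a a ∧ V.star (V.circ a a) a = a) ∧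
    (V.circ (V.star a a) a = a ∧ V.star a (V.star a a) = V.star a a) :=
  ⟨⟨V.circ a a, V.circ_self_spec a, fun _ hx => V.eq_circ_self_of_star_eq hx.2⟩,
    ⟨V.star a a, V.star_self_spec a, fun _ hy => V.eq_star_self_of_circ_eq hy.1⟩,
    V.circ_self_spec a, V.star_self_spec a⟩
end

section
/- Let S be a virtual flat biquandle. Then for all a, b in S there exist x, y in S with x = b∘y, y = a∘x, b = x*a, a = y*b, namely x = b∘a and y = a∘b; moreover (a∘b)*(b*a) = a and (b*a)∘(a∘b) = b. -/
theorem stmt_8 {S : Type*} (V : VFB S) (a b : S) :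
    (∃ x y : S, x = V.circ b y ∧ y = V.circ a x ∧ b = V.star x a ∧ a = V.star y b ∧
      x = V.circ b a ∧ y = V.circ a b) ∧
    V.star (V.circ a b) (V.star b a) = a ∧
    V.circ (V.star b a) (V.circ a b) = b :=
  ⟨⟨V.circ b a, V.circ a b, (V.circ_circ_invar a b b).symm, (V.circ_circ_invar b a a).symm,
      (V.star_circ a b).symm, (V.star_circ b a).symm, rfl, rfl⟩,
    (V.star_star_invar b a _).trans (V.star_circ b a),
    (V.circ_circ_invar a b _).trans (V.circ_star a b)⟩
end

section
/- Let M be a module over Z[s]/(s^2) and define a*b = -s·b + (1-s)·a and a∘b = s·b + (1+s)·a (i.e. S_b(a) = -sb + (1-s)a, T_b(a) = sb + (1+s)a). Then these operations make M a virtual flat biquandle: the maps S_a, T_a pairwise commute appropriately, S_a = S_{T_b(a)} = S_{S_b(a)}, T_a = T_{S_b(a)} = T_{T_b(a)}, and T_a S_a = S_a T_a = id. -/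
/-!
Writing `S_b(a) = a - s(a + b)` and `T_b(a) = a + s(a + b)`, both maps only perturb `a` by a
multiple of `s`, so `s • S_b(a) = s • a = s • T_b(a)` because `s² = 0`. Hence the right operand
enters `S_b` and `T_b` only through `s • b`, which gives the invariance axioms, and every
composite of two such maps is `x` plus a correction symmetric in the two operands, which gives
the commutation and inverse axioms.
-/

section SquareZero

variable {R M : Type*} [Ring R] [AddCommGroup M] [Module R M]

theorem smul_smul_of_mul_self_eq_zero {s : R} (hs : s * s = 0) (x : M) : s • s • x = 0 := by
  rw [smul_smul, hs, zero_smul]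

theorem smul_sub_smul_add_of_mul_self_eq_zero {s : R} (hs : s * s = 0) (a b : M) :
    s • (a - s • (a + b)) = s • a := by
  rw [smul_sub, smul_smul_of_mul_self_eq_zero hs, sub_zero]

theorem smul_add_smul_add_of_mul_self_eq_zero {s : R} (hs : s * s = 0) (a b : M) :
    s • (a + s • (a + b)) = s • a := by
  rw [smul_add, smul_smul_of_mul_self_eq_zero hs, add_zero]

def VFB.ofMulSelfEqZero (s : R) (hs : s * s = 0) : VFB M where
  star a b := a - s • (a + b)
  circ a b := a + s • (a + b)
  star_star_comm a b x := by
    simp only [smul_add, smul_sub, smul_smul_of_mul_self_eq_zero hs]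
    abel
  circ_circ_comm a b x := by
    simp only [smul_add, smul_smul_of_mul_self_eq_zero hs]
    abel
  star_circ_comm a b x := by
    simp only [smul_add, smul_sub, smul_smul_of_mul_self_eq_zero hs]
    abel
  star_circ_invar a b x := by
    rw [smul_add, smul_add_smul_add_of_mul_self_eq_zero hs, ← smul_add]
  star_star_invar a b x := by
    rw [smul_add, smul_sub_smul_add_of_mul_self_eq_zero hs, ← smul_add]
  circ_star_invar a b x := by
    rw [smul_add, smul_sub_smul_add_of_mul_self_eq_zero hs, ← smul_add]
  circ_circ_invar a b x := by
    rw [smul_add, smul_add_smul_add_of_mul_self_eq_zero hs, ← smul_add]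
  circ_star a x := by
    simp only [smul_add, smul_sub, smul_smul_of_mul_self_eq_zero hs]
    abel
  star_circ a x := by
    simp only [smul_add, smul_smul_of_mul_self_eq_zero hs]
    abel

end SquareZero

open DualNumber in
theorem stmt_10 (M : Type*) [AddCommGroup M] [Module (DualNumber ℤ) M] :
    let s : DualNumber ℤ := eps
    ∃ V : VFB M,
      (∀ a b : M, V.star a b = -s • b + (1 - s) • a) ∧
      (∀ a b : M, V.circ a b = s • b + (1 + s) • a) := by
  intro s
  refine ⟨VFB.ofMulSelfEqZero s eps_mul_eps, fun a b => ?_, fun a b => ?_⟩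
  · change a - s • (a + b) = _
    module
  · change a + s • (a + b) = _
    module
end

section
/- Let S be a virtual flat biquandle, A an abelian group with no 2-torsion, and φ: S × S → A a function satisfying φ(a,b) + φ(b∘a, a*b) = 0 for all a, b ∈ S. Then φ(a, a*a) = 0 and φ(a∘a, a) = 0 for all a ∈ S, and φ(b, a*b) + φ(a, b*a) = 0 and φ(b∘a, a) + φ(a∘b, b) = 0 for all a, b ∈ S. -/
namespace VFB

variable {S A : Type*} [AddCommMonoid A] (V : VFB S) {φ : S → S → A}

theorem cocycle_star_symm (hφ : ∀ a b : S, φ a b + φ (V.circ b a) (V.star a b) = 0) (a b : S) :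
    φ b (V.star a b) + φ a (V.star b a) = 0 := by
  have h := hφ a (V.star b a)
  rwa [V.circ_star, V.star_star_invar, add_comm] at h

theorem cocycle_circ_symm (hφ : ∀ a b : S, φ a b + φ (V.circ b a) (V.star a b) = 0) (a b : S) :
    φ (V.circ b a) a + φ (V.circ a b) b = 0 := by
  have h := hφ (V.circ a b) b
  rwa [V.circ_circ_invar, V.star_circ, add_comm] at h

end VFB

theorem stmt_15 {S : Type*} {A : Type*} [AddCommGroup A]
    (hA : ∀ x : A, x + x = 0 → x = 0)
    (V : VFB S) (φ : S → S → A)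
    (hφ : ∀ a b : S, φ a b + φ (V.circ b a) (V.star a b) = 0) :
    (∀ a : S, φ a (V.star a a) = 0) ∧
    (∀ a : S, φ (V.circ a a) a = 0) ∧
    (∀ a b : S, φ b (V.star a b) + φ a (V.star b a) = 0) ∧
    (∀ a b : S, φ (V.circ b a) a + φ (V.circ a b) b = 0) :=
  ⟨fun a => hA _ (V.cocycle_star_symm hφ a a), fun a => hA _ (V.cocycle_circ_symm hφ a a),
    V.cocycle_star_symm hφ, V.cocycle_circ_symm hφ⟩
end

section
/- Let S be a virtual flat biquandle and A an abelian group. For any function η: S → A, the coboundary φ(a,b) := -η(b) + η(b∘a) + η(a*b) - η(a) satisfies the cocycle condition of the complex C^*_{SF}: for all a, b, c ∈ S, -φ(b,c) + φ(b, c∘a) + φ(a,c) - φ(a, c∘b) = 0. -/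
theorem stmt_16 {S : Type*} {A : Type*} [AddCommGroup A]
    (V : VFB S) (η : S → A) :
    let φ : S → S → A := fun a b => -η b + η (V.circ b a) + η (V.star a b) - η a
    ∀ a b c : S,
      -φ b c + φ b (V.circ c a) + φ a c - φ a (V.circ c b) = 0 := by
  intro φ a b c
  -- `S_{T_b(c)} = S_c` and `T_a T_b = T_b T_a` leave only terms that cancel in pairs.
  simp only [φ, V.star_circ_invar, V.circ_circ_comm]
  abel
end

section
/- For any subsingleton-generated virtual flat biquandle: the sub-virtual-flat-biquandle generated by a single element a consists exactly of the elements {T_a^n(a), S_a^n(a) : n ≥ 0} = {a} ∪ {a∘a∘⋯∘a} ∪ {a*a*⋯*a}; that is, the closure of {a} under the two operations equals the set of iterates of S_a and T_a applied to a. -/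
namespace VFB

variable {S : Type*} (V : VFB S)

/-- The orbit of `a` under the bijection `S_a`, as the union of its forward and backward halves. -/
def orbit (a : S) : Set S :=
  {x | ∃ n : ℕ, x = (fun z => V.star z a)^[n] a ∨ x = (fun z => V.circ z a)^[n] a}

theorem self_mem_orbit (a : S) : a ∈ V.orbit a := ⟨0, Or.inl rfl⟩

theorem star_iterate_star_right (x y b : S) (n : ℕ) :
    V.star x ((fun z => V.star z b)^[n] y) = V.star x y := by
  induction n with
  | zero => rfl
  | succ n ih => rw [Function.iterate_succ_apply', V.star_star_invar, ih]

theorem star_iterate_circ_right (x y b : S) (n : ℕ) :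
    V.star x ((fun z => V.circ z b)^[n] y) = V.star x y := by
  induction n with
  | zero => rfl
  | succ n ih => rw [Function.iterate_succ_apply', V.star_circ_invar, ih]

theorem circ_iterate_star_right (x y b : S) (n : ℕ) :
    V.circ x ((fun z => V.star z b)^[n] y) = V.circ x y := by
  induction n with
  | zero => rfl
  | succ n ih => rw [Function.iterate_succ_apply', V.circ_star_invar, ih]

theorem circ_iterate_circ_right (x y b : S) (n : ℕ) :
    V.circ x ((fun z => V.circ z b)^[n] y) = V.circ x y := by
  induction n with
  | zero => rfl
  | succ n ih => rw [Function.iterate_succ_apply', V.circ_circ_invar, ih]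

variable {V}

theorem star_eq_of_mem_orbit {a y : S} (hy : y ∈ V.orbit a) (x : S) : V.star x y = V.star x a := by
  obtain ⟨n, rfl | rfl⟩ := hy
  exacts [V.star_iterate_star_right x a a n, V.star_iterate_circ_right x a a n]

theorem circ_eq_of_mem_orbit {a y : S} (hy : y ∈ V.orbit a) (x : S) : V.circ x y = V.circ x a := by
  obtain ⟨n, rfl | rfl⟩ := hy
  exacts [V.circ_iterate_star_right x a a n, V.circ_iterate_circ_right x a a n]

theorem star_mem_orbit {a x : S} (hx : x ∈ V.orbit a) : V.star x a ∈ V.orbit a := by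
  obtain ⟨n, rfl | rfl⟩ := hx
  · exact ⟨n + 1, Or.inl (Function.iterate_succ_apply' (fun z => V.star z a) n a).symm⟩
  · cases n with
    | zero => exact ⟨1, Or.inl rfl⟩
    | succ n =>
      refine ⟨n, Or.inr ?_⟩
      rw [Function.iterate_succ_apply', V.star_circ]

theorem circ_mem_orbit {a x : S} (hx : x ∈ V.orbit a) : V.circ x a ∈ V.orbit a := by
  obtain ⟨n, rfl | rfl⟩ := hx
  · cases n with
    | zero => exact ⟨1, Or.inr rfl⟩
    | succ n =>
      refine ⟨n, Or.inl ?_⟩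
      rw [Function.iterate_succ_apply', V.circ_star]
  · exact ⟨n + 1, Or.inr (Function.iterate_succ_apply' (fun z => V.circ z a) n a).symm⟩

theorem orbit_subset_of_closed {a : S} {T : Set S} (haT : a ∈ T)
    (hT : ∀ x ∈ T, ∀ y ∈ T, V.star x y ∈ T ∧ V.circ x y ∈ T) : V.orbit a ⊆ T := by
  have hstar : Set.MapsTo (fun z => V.star z a) T T := fun x hx => (hT x hx a haT).1
  have hcirc : Set.MapsTo (fun z => V.circ z a) T T := fun x hx => (hT x hx a haT).2
  rintro x ⟨n, rfl | rfl⟩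
  exacts [hstar.iterate n haT, hcirc.iterate n haT]

end VFB

theorem stmt_18 {S : Type*} (V : VFB S) (a : S) :
    ⋂₀ {T : Set S | a ∈ T ∧
        ∀ x ∈ T, ∀ y ∈ T, V.star x y ∈ T ∧ V.circ x y ∈ T} =
      {x : S | ∃ n : ℕ,
        x = (fun z => V.star z a)^[n] a ∨ x = (fun z => V.circ z a)^[n] a} := by
  apply Set.Subset.antisymm
  · refine Set.sInter_subset_of_mem ⟨V.self_mem_orbit a, fun x hx y hy => ?_⟩
    rw [VFB.star_eq_of_mem_orbit hy, VFB.circ_eq_of_mem_orbit hy]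
    exact ⟨VFB.star_mem_orbit hx, VFB.circ_mem_orbit hx⟩
  · exact Set.subset_sInter fun T ⟨haT, hT⟩ => VFB.orbit_subset_of_closed haT hT
end
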